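/- If f ∈ FinStoch(m,n) and f' ∈ FinStoch(m',n) are stochastic matrices whose column-images have equal convex hulls in D(n), then there exist a finite set m'', a stochastic matrix h ∈ FinStoch(m'', n), and surjective stochastic maps g : m → m'' and g' : m' → m'' such that f = h ∘ g and f' = h ∘ g'. -/

import Mathlib

/-- Stochastic matrix predicate: columns are probability vectors. -/
def FinStochMat {m n : ℕ} (f : Fin n → Fin m → ℝ) : Prop :=
  (∀ a i, 0 ≤ f a i) ∧ ∀ i, ∑ a, f a i = 1

/-- A stochastic map is surjective if every Dirac distribution on the codomain
appears among its columns. -/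
def SurjStoch {m n : ℕ} (f : Fin n → Fin m → ℝ) : Prop :=
  ∀ j : Fin n, ∃ i : Fin m, (fun a => f a i) = fun a => if a = j then (1 : ℝ) else 0

/-!
The extreme points of the common convex hull `K` are finitely many, they are columns of both `f`
and `f'`, and they span `K`. Take them as the columns of `h` and write every column of `f` and
`f'` as a convex combination of them, choosing the Dirac weight for a column that is itself an
extreme point: these Dirac columns make `g` and `g'` surjective.
-/

open Set Function

lemma mem_convexHull_range_iff_exists_mem_stdSimplex {R E ι : Type*} [Field R] [LinearOrder R]
    [IsStrictOrderedRing R] [AddCommGroup E] [Module R E] [Fintype ι] {v : ι → E} {x : E} :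
    x ∈ convexHull R (range v) ↔ ∃ w ∈ stdSimplex R ι, ∑ i, w i • v i = x := by
  classical
  have hv : range v = Fintype.linearCombination R v '' range fun i ↦ Pi.single i 1 := by
    rw [← range_comp]
    congr! 1
    ext i
    simp
  rw [hv, ← LinearMap.image_convexHull, convexHull_rangle_single_eq_stdSimplex]
  simp [Fintype.linearCombination_apply]

lemma exists_mem_stdSimplex_sum_smul_eq_of_mem_convexHull {R E ι : Type*} [Field R]
    [LinearOrder R] [IsStrictOrderedRing R] [AddCommGroup E] [Module R E] [Fintype ι]
    [DecidableEq ι] {v : ι → E} (hv : Injective v) {x : E} (hx : x ∈ convexHull R (range v)) :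
    ∃ w ∈ stdSimplex R ι, ∑ i, w i • v i = x ∧ ∀ i, v i = x → w = Pi.single i 1 := by
  by_cases hxv : x ∈ range v
  · obtain ⟨i, rfl⟩ := hxv
    refine ⟨Pi.single i 1, single_mem_stdSimplex R i, by simp [Pi.single_apply], ?_⟩
    exact fun j hj ↦ by rw [hv hj]
  · obtain ⟨w, hw, hwx⟩ := mem_convexHull_range_iff_exists_mem_stdSimplex.1 hx
    exact ⟨w, hw, hwx, fun i hi ↦ (hxv ⟨i, hi⟩).elim⟩

lemma Set.Finite.convexHull_extremePoints_convexHull {E : Type*} [AddCommGroup E] [Module ℝ E]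
    [TopologicalSpace E] [T2Space E] [IsTopologicalAddGroup E] [ContinuousSMul ℝ E]
    [LocallyConvexSpace ℝ E] {s : Set E} (hs : s.Finite) :
    convexHull ℝ ((convexHull ℝ s).extremePoints ℝ) = convexHull ℝ s := by
  have hfin : ((convexHull ℝ s).extremePoints ℝ).Finite :=
    hs.subset extremePoints_convexHull_subset
  rw [← (hfin.isCompact_convexHull (𝕜 := ℝ)).isClosed.closure_eq]
  exact closure_convexHull_extremePoints (hs.isCompact_convexHull (𝕜 := ℝ))
    (convex_convexHull ℝ s)

lemma finStochMat_iff_forall_mem_stdSimplex {m n : ℕ} {f : Fin n → Fin m → ℝ} :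
    FinStochMat f ↔ ∀ i, swap f i ∈ stdSimplex ℝ (Fin n) := by
  simp only [FinStochMat, stdSimplex, mem_ofPred_eq, swap, forall_and]
  exact and_congr_left' forall_comm

lemma exists_surjStoch_factorization {m n k : ℕ} (f : Fin n → Fin m → ℝ)
    (e : Fin k → Fin n → ℝ) (he : Injective e) (he_sub : range e ⊆ range (swap f))
    (hf_sub : range (swap f) ⊆ convexHull ℝ (range e)) :
    ∃ g : Fin k → Fin m → ℝ,
      FinStochMat g ∧ SurjStoch g ∧ ∀ a i, f a i = ∑ j, e j a * g j i := by
  choose w hw hwf hw_single using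
    fun i ↦ exists_mem_stdSimplex_sum_smul_eq_of_mem_convexHull he (hf_sub (mem_range_self i))
  refine ⟨swap w, finStochMat_iff_forall_mem_stdSimplex.2 hw, fun j ↦ ?_, fun a i ↦ ?_⟩
  · obtain ⟨i, hi⟩ := he_sub (mem_range_self j)
    refine ⟨i, ?_⟩
    ext a
    simp [swap, hw_single i j hi.symm, Pi.single_apply]
  · have := congrFun (hwf i) a
    simp only [Finset.sum_apply, Pi.smul_apply, smul_eq_mul, swap] at this
    simp only [swap, ← this, mul_comm]

theorem common_factorization_general {m m' n : ℕ}
    (f : Fin n → Fin m → ℝ) (f' : Fin n → Fin m' → ℝ)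
    (hf : FinStochMat f)
    (hhull : convexHull ℝ (Set.range (fun i : Fin m => fun a => f a i))
        = convexHull ℝ (Set.range (fun i : Fin m' => fun a => f' a i))) :
    ∃ m'' : ℕ, ∃ h : Fin n → Fin m'' → ℝ,
      ∃ g : Fin m'' → Fin m → ℝ, ∃ g' : Fin m'' → Fin m' → ℝ,
        FinStochMat h ∧ FinStochMat g ∧ SurjStoch g ∧ FinStochMat g' ∧ SurjStoch g' ∧
        (∀ a i, f a i = ∑ j, h a j * g j i) ∧
        (∀ a i, f' a i = ∑ j, h a j * g' j i) := by
  change convexHull ℝ (range (swap f)) = convexHull ℝ (range (swap f')) at hhull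
  set K := convexHull ℝ (range (swap f))
  have hK_ext : (K.extremePoints ℝ).Finite :=
    (finite_range _).subset extremePoints_convexHull_subset
  obtain ⟨k, e, he, he_range⟩ := hK_ext.fin_param
  have hK : convexHull ℝ (range e) = K :=
    he_range ▸ (finite_range _).convexHull_extremePoints_convexHull
  have he_sub : range e ⊆ range (swap f) := he_range ▸ extremePoints_convexHull_subset
  have he_sub' : range e ⊆ range (swap f') :=
    he_range ▸ hhull ▸ extremePoints_convexHull_subset
  obtain ⟨g, hg, hg_surj, hfg⟩ := exists_surjStoch_factorization f e he he_sub
    (hK ▸ subset_convexHull ℝ _)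
  obtain ⟨g', hg', hg'_surj, hfg'⟩ := exists_surjStoch_factorization f' e he he_sub'
    (hK ▸ hhull ▸ subset_convexHull ℝ _)
  have he_stoch : FinStochMat (swap e) := finStochMat_iff_forall_mem_stdSimplex.2 fun j ↦ by
    obtain ⟨i, hi⟩ := he_sub (mem_range_self j)
    rw [show swap (swap e) j = e j from rfl, ← hi]
    exact finStochMat_iff_forall_mem_stdSimplex.1 hf i
  exact ⟨k, swap e, g, g', he_stoch, hg, hg_surj, hg', hg'_surj, hfg, hfg'⟩

/-- If two stochastic matrices have columns with equal convex hulls, they factor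
through a common stochastic matrix via surjective stochastic maps. -/
theorem common_factorization {m m' n : ℕ}
    (f : Fin n → Fin m → ℝ) (f' : Fin n → Fin m' → ℝ)
    (hf : FinStochMat f) (hf' : FinStochMat f')
    (hhull : convexHull ℝ (Set.range (fun i : Fin m => fun a => f a i))
        = convexHull ℝ (Set.range (fun i : Fin m' => fun a => f' a i))) :
    ∃ m'' : ℕ, ∃ h : Fin n → Fin m'' → ℝ,
      ∃ g : Fin m'' → Fin m → ℝ, ∃ g' : Fin m'' → Fin m' → ℝ,
        FinStochMat h ∧ FinStochMat g ∧ SurjStoch g ∧ FinStochMat g' ∧ SurjStoch g' ∧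
        (∀ a i, f a i = ∑ j, h a j * g j i) ∧
        (∀ a i, f' a i = ∑ j, h a j * g' j i) :=
  common_factorization_general f f' hf hhull
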